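/- Let 1 ≤ k ≤ n. The minimum sum-subspace distance of the lifted s-interleaved linearized Reed–Solomon code equals 2·(n − k + 1); that is, the minimum of Σ_(i=1)^ℓ d_S(U^(i)(M), U^(i)(M')) over all pairs of distinct M, M' ∈ F^(s×k) is exactly 2·(n − k + 1). -/

import Mathlib

namespace Stmt16

/-- `genNorm σ a i = σ^(i-1)(a) ⋯ σ(a) · a`, the generalized power function `N_i(a)`. -/
def genNorm {F : Type} [Field F] (σ : F ≃+* F) (a : F) : ℕ → F
  | 0 => 1
  | i + 1 => (⇑σ)^[i] a * genNorm σ a i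

/-- Generalized operator `D_a^i(b) = σ^i(b) · N_i(a)` for `i ∈ ℕ`. -/
def opev {F : Type} [Field F] (σ : F ≃+* F) (a b : F) (i : ℕ) : F :=
  (⇑σ)^[i] b * genNorm σ a i

/-- `b` is σ-conjugate to `a`, i.e. `b = σ(c)·a·c⁻¹` for some nonzero `c`. -/
def SConj {F : Type} [Field F] (σ : F ≃+* F) (a b : F) : Prop :=
  ∃ c : F, c ≠ 0 ∧ b = σ c * a * c⁻¹

/-- σ-generalized Moore matrix `λ_d(x)_a⃗` w.r.t. the length partition `nn`:
its row `r` applies `D_{a_i}^r` entrywise to the `i`-th block of `x`. -/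
def moore {F : Type} [Field F] (σ : F ≃+* F) {ℓ : ℕ} (nn : Fin ℓ → ℕ) (aa : Fin ℓ → F)
    (d : ℕ) (x : (Σ i : Fin ℓ, Fin (nn i)) → F) :
    Matrix (Fin d) (Σ i : Fin ℓ, Fin (nn i)) F :=
  Matrix.of fun r p => opev σ (aa p.1) (x p) (r : ℕ)

/-- `λ_d(X)_a⃗` for a matrix `X`: the stack of `λ_d(x_j)_a⃗` over the rows of `X`. -/
def mooreMat {F : Type} [Field F] (σ : F ≃+* F) {ℓ : ℕ} (nn : Fin ℓ → ℕ) (aa : Fin ℓ → F)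
    {s : ℕ} (d : ℕ) (X : Matrix (Fin s) (Σ i : Fin ℓ, Fin (nn i)) F) :
    Matrix (Fin s × Fin d) (Σ i : Fin ℓ, Fin (nn i)) F :=
  Matrix.of fun r p => opev σ (aa p.1) (X r.1 p) (r.2 : ℕ)

/-- `rk_q` of a vector: the `K`-dimension of the `K`-span of its entries. -/
noncomputable def rkq (K : Type) [Field K] {F : Type} [Field F] [Algebra K F] {ι : Type}
    (v : ι → F) : ℕ :=
  Module.finrank K (Submodule.span K (Set.range v))

/-- `rk_q` of a matrix: the `K`-dimension of the `K`-span of its columns. -/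
noncomputable def rkqMat (K : Type) [Field K] {F : Type} [Field F] [Algebra K F]
    {s : ℕ} {ι : Type} (X : Matrix (Fin s) ι F) : ℕ :=
  Module.finrank K (Submodule.span K (Set.range fun j : ι => fun r : Fin s => X r j))

/-- Sum-rank weight of a blockwise vector. -/
noncomputable def wtV (K : Type) [Field K] {F : Type} [Field F] [Algebra K F] {ℓ : ℕ}
    (nn : Fin ℓ → ℕ) (x : (Σ i : Fin ℓ, Fin (nn i)) → F) : ℕ :=
  ∑ i, rkq K fun μ : Fin (nn i) => x ⟨i, μ⟩

/-- Sum-rank weight of a blockwise matrix. -/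
noncomputable def wtM (K : Type) [Field K] {F : Type} [Field F] [Algebra K F] {s ℓ : ℕ}
    (nn : Fin ℓ → ℕ) (X : Matrix (Fin s) (Σ i : Fin ℓ, Fin (nn i)) F) : ℕ :=
  ∑ i, rkqMat K (Matrix.of fun (r : Fin s) (μ : Fin (nn i)) => X r ⟨i, μ⟩)

/-- Codeword `C(M) = M · λ_k(β)_a⃗` of the `s`-interleaved linearized Reed–Solomon code. -/
def codeword {F : Type} [Field F] (σ : F ≃+* F) {ℓ : ℕ} (nn : Fin ℓ → ℕ) (aa : Fin ℓ → F)
    (β : (Σ i : Fin ℓ, Fin (nn i)) → F) {s : ℕ} (k : ℕ) (M : Matrix (Fin s) (Fin k) F) :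
    Matrix (Fin s) (Σ i : Fin ℓ, Fin (nn i)) F :=
  M * moore σ nn aa k β

/-- The `i`-th component subspace of the lifted codeword of `M`: the `K`-span in
`F^{s+1}` of the `n_i` vectors `(β^(i)_μ, C(M)^(i)_{1,μ}, …, C(M)^(i)_{s,μ})`. -/
noncomputable def liftSp (K : Type) [Field K] {F : Type} [Field F] [Algebra K F]
    (σ : F ≃+* F) {ℓ : ℕ} (nn : Fin ℓ → ℕ) (aa : Fin ℓ → F)
    (β : (Σ i : Fin ℓ, Fin (nn i)) → F) {s : ℕ} (k : ℕ)
    (M : Matrix (Fin s) (Fin k) F) (i : Fin ℓ) : Submodule K (Fin (s + 1) → F) :=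
  Submodule.span K (Set.range fun μ : Fin (nn i) =>
    Fin.cons (β ⟨i, μ⟩) fun j : Fin s => codeword σ nn aa β k M j ⟨i, μ⟩)

/-!
The lifted subspaces `U^(i)(M)` and `U^(i)(M')` have the same, `K`-independent, first coordinates
`β^(i)`. Hence `U^(i)(M) + U^(i)(M')` is the direct sum of `U^(i)(M)` and the span of the
differences of generators, whose dimension is the rank of the block `C(M - M')^(i)`. So the sum of
the subspace distances is twice the sum-rank weight of the codeword `C(M - M')`, and it remains to
see that the nonzero codewords of minimal sum-rank weight have weight exactly `n - k + 1`.

For the lower bound, a nonzero row `e` of `M - M'` is a nonzero skew polynomial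
`f = ∑_{t < k} e_t x^t` in `F[x; σ]`, and the `i`-th block of that row is `f(D_{a_i})` applied to
`β^(i)`. By rank-nullity its rank is at least `n_i - dim ker f(D_{a_i})`, and the Lam–Leroy bound
says that these kernels have total dimension at most `k - 1` when the `a_i` are nonzero and
pairwise non-σ-conjugate. For the upper bound, linear algebra gives a nonzero `f` of degree `< k`
vanishing at `k - 1` prescribed evaluation points.
-/

section LinearAlgebra

open Module Submodule Finset

variable {K V W U : Type} [Field K] [AddCommGroup V] [Module K V] [AddCommGroup W] [Module K W]
  [AddCommGroup U] [Module K U]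

theorem finrank_le_finrank_map_add_finrank_ker [FiniteDimensional K V] (φ : V →ₗ[K] W)
    (p : Submodule K V) :
    finrank K p ≤ finrank K (p.map φ) + finrank K (LinearMap.ker φ) := by
  have hrank := (φ.domRestrict p).finrank_range_add_finrank_ker
  rw [LinearMap.range_domRestrict, LinearMap.ker_domRestrict, ← finrank_map_subtype_eq,
    map_comap_subtype] at hrank
  have := finrank_mono (inf_le_right : p ⊓ LinearMap.ker φ ≤ LinearMap.ker φ)
  omega

theorem finrank_ker_comp_le [FiniteDimensional K V] [FiniteDimensional K W] (φ : V →ₗ[K] W)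
    (ψ : W →ₗ[K] U) :
    finrank K (LinearMap.ker (ψ ∘ₗ φ)) ≤
      finrank K (LinearMap.ker ψ) + finrank K (LinearMap.ker φ) := by
  have hmap : (LinearMap.ker (ψ ∘ₗ φ)).map φ ≤ LinearMap.ker ψ := by
    rw [map_le_iff_le_comap, LinearMap.ker_comp]
  have := finrank_le_finrank_map_add_finrank_ker φ (LinearMap.ker (ψ ∘ₗ φ))
  have := finrank_mono hmap
  omega

theorem finrank_span_range_le_card_ne_zero [DecidableEq V] {ι : Type} [Fintype ι] (v : ι → V) :
    finrank K (span K (Set.range v)) ≤ #{i | v i ≠ 0} := by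
  have hspan : span K (Set.range v) = span K (({i | v i ≠ 0} : Finset ι).image v : Set V) := by
    refine le_antisymm (span_le.2 ?_) (span_mono (by simp))
    rintro _ ⟨i, rfl⟩
    by_cases hi : v i = 0
    · simp [hi]
    · exact subset_span (mem_coe.2 (mem_image_of_mem v (by simpa using hi)))
  rw [hspan]
  exact (finrank_span_finset_le_card _).trans card_image_le

/-- If `π` maps `g` and `g'` to the same independent family, then `span g ⊔ span g'` is the
direct sum of `span g` and `span (g - g') ≤ ker π`. -/
theorem finrank_sup_sub_finrank_inf_span {ι : Type} [Fintype ι] (π : V →ₗ[K] W)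
    {g g' : ι → V}
    (hg : LinearIndependent K (π ∘ g)) (hgg' : π ∘ g' = π ∘ g) :
    finrank K ↥(span K (Set.range g) ⊔ span K (Set.range g')) -
        finrank K ↥(span K (Set.range g) ⊓ span K (Set.range g')) =
      2 * finrank K (span K (Set.range (g - g'))) := by
  set G := span K (Set.range g)
  set G' := span K (Set.range g')
  set Z := span K (Set.range (g - g'))
  have hsup : G ⊔ G' = G ⊔ Z := by
    apply le_antisymm <;> refine sup_le le_sup_left (span_le.2 ?_) <;> rintro _ ⟨μ, rfl⟩
    · rw [show g' μ = g μ - (g - g') μ by simp]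
      exact sub_mem (mem_sup_left (subset_span ⟨μ, rfl⟩))
        (mem_sup_right (subset_span ⟨μ, rfl⟩))
    · exact sub_mem (mem_sup_left (subset_span ⟨μ, rfl⟩))
        (mem_sup_right (subset_span ⟨μ, rfl⟩))
  have hZ : Z ≤ LinearMap.ker π := span_le.2 <| by
    rintro _ ⟨μ, rfl⟩
    show π (g μ - g' μ) = 0
    rw [map_sub]
    exact sub_eq_zero.2 (congrFun hgg' μ).symm
  have hinf : G ⊓ Z = ⊥ := disjoint_iff.1 ((range_ker_disjoint hg).mono_right hZ)
  have := FiniteDimensional.span_of_finite K (Set.finite_range g)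
  have := FiniteDimensional.span_of_finite K (Set.finite_range g')
  have := FiniteDimensional.span_of_finite K (Set.finite_range (g - g'))
  have hG : finrank K G = Fintype.card ι := finrank_span_eq_card hg.of_comp
  have hG' : finrank K G' = Fintype.card ι := finrank_span_eq_card (hgg' ▸ hg).of_comp
  have h1 := finrank_sup_add_finrank_inf_eq G G'
  have h2 := finrank_sup_add_finrank_inf_eq G Z
  rw [hinf, finrank_bot] at h2
  rw [hsup] at h1 ⊢
  omega

theorem finrank_span_range_cons_zero {ι : Type} {s : ℕ} (w : ι → Fin s → V) :
    finrank K (span K (Set.range fun μ => (Fin.cons 0 (w μ) : Fin (s + 1) → V))) =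
      finrank K (span K (Set.range w)) := by
  let j : (Fin s → V) →ₗ[K] Fin (s + 1) → V := LinearMap.vecCons 0 LinearMap.id
  have hj : Function.Injective j := fun x y h => by simpa [j] using congrArg Fin.tail h
  rw [show (fun μ => (Fin.cons 0 (w μ) : Fin (s + 1) → V)) = j ∘ w from rfl, Set.range_comp,
    ← map_span]
  exact (equivMapOfInjective j hj _).finrank_eq.symm

open Matrix in
theorem exists_ne_zero_vecMul_eq_zero_on {m ι : Type} [Fintype m] (A : Matrix m ι K)
    (S : Finset ι) (hS : #S < Fintype.card m) :
    ∃ e : m → K, e ≠ 0 ∧ ∀ p ∈ S, (e ᵥ* A) p = 0 := by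
  let Φ := LinearMap.funLeft K K (Subtype.val : S → ι) ∘ₗ A.vecMulLinear
  have hker : LinearMap.ker Φ ≠ ⊥ := LinearMap.ker_ne_bot_of_finrank_lt (by simpa using hS)
  obtain ⟨e, he, he0⟩ := (Submodule.ne_bot_iff _).1 hker
  exact ⟨e, he0, fun p hp => congrFun he ⟨p, hp⟩⟩

end LinearAlgebra

section SkewPowers

variable {F : Type} [Field F] (σ : F ≃+* F)

theorem genNorm_succ' (a : F) (i : ℕ) : genNorm σ a (i + 1) = σ (genNorm σ a i) * a := by
  induction i with
  | zero => simp [genNorm]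
  | succ i ih =>
    calc genNorm σ a (i + 2) = σ^[i + 1] a * genNorm σ a (i + 1) := rfl
      _ = σ (σ^[i] a * genNorm σ a i) * a := by
        rw [ih, map_mul, Function.iterate_succ_apply']; ring
      _ = σ (genNorm σ a (i + 1)) * a := rfl

theorem opev_zero (a b : F) : opev σ a b 0 = b := by
  simp [opev, genNorm]

theorem opev_succ (a b : F) (i : ℕ) : opev σ a b (i + 1) = σ (opev σ a b i) * a := by
  rw [opev, opev, genNorm_succ', Function.iterate_succ_apply', map_mul]
  ring

theorem opev_mul_left (a c b : F) (m : ℕ) : opev σ a (c * b) m = σ^[m] c * opev σ a b m := by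
  rw [opev, opev, iterate_map_mul, mul_assoc]

theorem opev_eq_genNorm_mul {a b : F} (hb : b ≠ 0) (j : ℕ) :
    opev σ a b j = genNorm σ (σ b * a * b⁻¹) j * b := by
  induction j with
  | zero => simp [opev_zero, genNorm]
  | succ j ih =>
    rw [opev_succ, ih, genNorm_succ', map_mul]
    field_simp

end SkewPowers

section SkewDivision

open Finset

variable {F : Type} [Field F] (σ : F ≃+* F)

/-- Coefficients of the right quotient of `∑_{t < N} e_t x^t` by `x - c` in the skew polynomial
ring `F[x; σ]`. -/
def skewQuot (e : ℕ → F) (N : ℕ) (c : F) (m : ℕ) : F :=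
  ∑ t ∈ Ico (m + 1) N, e t * ∏ u ∈ Ico (m + 1) t, σ^[u] c

theorem skewQuot_eq_zero_of_le (e : ℕ → F) {N m : ℕ} (c : F) (h : N ≤ m + 1) :
    skewQuot σ e N c m = 0 := by
  simp [skewQuot, Ico_eq_empty_of_le h]

/-- Variation of constants for the recursion `x_{m+1} = σ^m(c) x_m + y_m`. -/
theorem eq_genNorm_mul_add_sum (x : ℕ → F) (c : F) (t : ℕ) :
    x t = genNorm σ c t * x 0 +
      ∑ m ∈ range t, (∏ u ∈ Ico (m + 1) t, σ^[u] c) * (x (m + 1) - σ^[m] c * x m) := by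
  induction t with
  | zero => simp [genNorm]
  | succ t ih =>
    have hprod : ∀ m ∈ range t, ∏ u ∈ Ico (m + 1) (t + 1), σ^[u] c
        = (∏ u ∈ Ico (m + 1) t, σ^[u] c) * σ^[t] c := fun m hm =>
      prod_Ico_succ_top (by simpa using hm) _
    have hsum : ∑ m ∈ range t,
          (∏ u ∈ Ico (m + 1) t, σ^[u] c) * σ^[t] c * (x (m + 1) - σ^[m] c * x m)
        = σ^[t] c * ∑ m ∈ range t,
          (∏ u ∈ Ico (m + 1) t, σ^[u] c) * (x (m + 1) - σ^[m] c * x m) := by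
      rw [mul_sum]
      exact sum_congr rfl fun _ _ => by ring
    rw [sum_range_succ, sum_congr rfl fun m hm => by rw [hprod m hm], hsum, genNorm]
    simp only [Ico_self, prod_empty, one_mul]
    linear_combination σ^[t] c * ih

/-- Division with remainder `∑ e_t x^t = q(x) (x - c) + ∑ e_t N_t(c)`, applied to an arbitrary
sequence `x` standing for the powers `x^t`. -/
theorem sum_mul_eq_sum_skewQuot_mul_add (e x : ℕ → F) (N : ℕ) (c : F) :
    ∑ t ∈ range N, e t * x t =
      ∑ m ∈ range N, skewQuot σ e N c m * (x (m + 1) - σ^[m] c * x m) +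
        (∑ t ∈ range N, e t * genNorm σ c t) * x 0 := by
  have hswap : ∑ t ∈ range N, ∑ m ∈ range t,
        e t * (∏ u ∈ Ico (m + 1) t, σ^[u] c) * (x (m + 1) - σ^[m] c * x m)
      = ∑ m ∈ range N, ∑ t ∈ Ico (m + 1) N,
        e t * (∏ u ∈ Ico (m + 1) t, σ^[u] c) * (x (m + 1) - σ^[m] c * x m) :=
    sum_comm' fun t m => by simp only [mem_range, mem_Ico]; omega
  simp only [skewQuot, sum_mul, ← hswap]
  rw [← sum_add_distrib]
  refine sum_congr rfl fun t _ => ?_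
  rw [eq_genNorm_mul_add_sum σ x c t, mul_add, mul_sum]
  simp only [mul_assoc]
  ring

theorem exists_skewQuot_ne_zero {e : ℕ → F} {N : ℕ} (he : ∃ j < N + 1, e j ≠ 0) {c : F}
    (hc : ∑ t ∈ range (N + 1), e t * genNorm σ c t = 0) :
    ∃ m < N, skewQuot σ e (N + 1) c m ≠ 0 := by
  obtain ⟨j, hj, hej⟩ := he
  by_contra! hq
  have hq' : ∀ m ∈ range (N + 1), skewQuot σ e (N + 1) c m = 0 := fun m hm => by
    rcases lt_or_ge m N with h | h
    · exact hq m h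
    · exact skewQuot_eq_zero_of_le σ e c (by omega)
  -- Test the division identity against the indicator sequence of `j`.
  have key := sum_mul_eq_sum_skewQuot_mul_add σ e (fun t => if t = j then 1 else 0) (N + 1) c
  rw [hc, zero_mul, add_zero] at key
  simp only [mul_ite, mul_one, mul_zero, sum_ite_eq', mem_range, hj, if_true] at key
  rw [sum_eq_zero fun m hm => by rw [hq' m hm, zero_mul]] at key
  exact hej key

end SkewDivision

section SkewEval

open Finset

variable (K : Type) {F : Type} [Field K] [Field F] [Algebra K F] (σ : F ≃+* F)
  (hσ : ∀ t : K, σ (algebraMap K F t) = algebraMap K F t)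

/-- The operator `D_a`. -/
def skewShift (a : F) : F →ₗ[K] F where
  toFun b := σ b * a
  map_add' x y := by rw [map_add, add_mul]
  map_smul' t x := by simp only [Algebra.smul_def, map_mul, hσ, RingHom.id_apply, mul_assoc]

/-- The operator `f(D_a)` of the skew polynomial `f = ∑_{j < N} e_j x^j`, which is encoded by the
coefficient sequence `e` together with the bound `N`. -/
def skewEval (e : ℕ → F) (N : ℕ) (a : F) : F →ₗ[K] F :=
  ∑ j ∈ range N, LinearMap.mulLeft K (e j) ∘ₗ skewShift K σ hσ a ^ j

variable {K σ hσ}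

theorem skewShift_pow_apply (a b : F) (m : ℕ) : (skewShift K σ hσ a ^ m) b = opev σ a b m := by
  induction m with
  | zero => rw [pow_zero, Module.End.one_apply, opev_zero]
  | succ m ih => rw [pow_succ', Module.End.mul_apply, ih, opev_succ]; rfl

theorem skewEval_apply (e : ℕ → F) (N : ℕ) (a b : F) :
    skewEval K σ hσ e N a b = ∑ j ∈ range N, e j * opev σ a b j := by
  simp [skewEval, LinearMap.sum_apply, skewShift_pow_apply]

theorem skewEval_succ_eq_comp (e : ℕ → F) (N : ℕ) {c : F}
    (hc : ∑ t ∈ range (N + 1), e t * genNorm σ c t = 0) (a : F) :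
    skewEval K σ hσ e (N + 1) a =
      skewEval K σ hσ (skewQuot σ e (N + 1) c) N a ∘ₗ
        (skewShift K σ hσ a - LinearMap.mulLeft K c) := by
  ext b
  have hstep : ∀ m,
      opev σ a (σ b * a - c * b) m = opev σ a b (m + 1) - σ^[m] c * opev σ a b m := fun m => by
    rw [← skewShift_pow_apply (K := K) (hσ := hσ) a _ m, map_sub, skewShift_pow_apply,
      skewShift_pow_apply, opev_mul_left σ a c b,
      ← skewShift_pow_apply (K := K) (hσ := hσ) a b (m + 1), pow_succ, Module.End.mul_apply,
      skewShift_pow_apply]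
    rfl
  rw [LinearMap.comp_apply, skewEval_apply, skewEval_apply,
    sum_mul_eq_sum_skewQuot_mul_add σ e (opev σ a b) (N + 1) c, hc, zero_mul, add_zero,
    sum_range_succ, skewQuot_eq_zero_of_le σ e c le_rfl, zero_mul, add_zero]
  exact sum_congr rfl fun m _ => by rw [← hstep]; rfl

theorem sum_mul_genNorm_eq_zero_of_mem_ker {e : ℕ → F} {N : ℕ} {a b : F}
    (hb : b ∈ LinearMap.ker (skewEval K σ hσ e N a)) (hb0 : b ≠ 0) :
    ∑ t ∈ range N, e t * genNorm σ (σ b * a * b⁻¹) t = 0 := by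
  rw [LinearMap.mem_ker, skewEval_apply] at hb
  simp only [opev_eq_genNorm_mul σ hb0, ← mul_assoc, ← sum_mul] at hb
  exact (mul_eq_zero.1 hb).resolve_right hb0

end SkewEval

section SConj

variable {F : Type} [Field F] {σ : F ≃+* F}

theorem SConj.symm {a b : F} (h : SConj σ a b) : SConj σ b a := by
  obtain ⟨c, hc, rfl⟩ := h
  refine ⟨c⁻¹, inv_ne_zero hc, ?_⟩
  have hσc : σ c ≠ 0 := (map_ne_zero σ).2 hc
  rw [map_inv₀]
  field_simp

theorem SConj.trans {a b c : F} (hab : SConj σ a b) (hbc : SConj σ b c) : SConj σ a c := by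
  obtain ⟨u, hu, rfl⟩ := hab
  obtain ⟨v, hv, rfl⟩ := hbc
  exact ⟨v * u, mul_ne_zero hv hu, by rw [map_mul, mul_inv]; ring⟩

end SConj

section LamLeroy

open Module

variable {K F : Type} [Field K] [Field F] [Algebra K F] {σ : F ≃+* F}
  {hσ : ∀ t : K, σ (algebraMap K F t) = algebraMap K F t}

theorem mem_ker_skewShift_sub_iff {a c b : F} :
    b ∈ LinearMap.ker (skewShift K σ hσ a - LinearMap.mulLeft K c) ↔ σ b * a = c * b :=
  sub_eq_zero

theorem sConj_of_ker_skewShift_sub_ne_bot {a c : F}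
    (h : LinearMap.ker (skewShift K σ hσ a - LinearMap.mulLeft K c) ≠ ⊥) : SConj σ a c := by
  obtain ⟨b, hb, hb0⟩ := (Submodule.ne_bot_iff _).1 h
  refine ⟨b, hb0, ?_⟩
  rw [mem_ker_skewShift_sub_iff.1 hb]
  field_simp

/-- Two solutions `b, b'` of `σ(b) a = c b` have a `σ`-fixed quotient `b' / b`. -/
theorem finrank_ker_skewShift_sub_le_one
    (hfix : ∀ x, σ x = x → x ∈ Set.range (algebraMap K F)) {a : F} (ha : a ≠ 0) (c : F) :
    finrank K (LinearMap.ker (skewShift K σ hσ a - LinearMap.mulLeft K c)) ≤ 1 := by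
  by_cases hbot : LinearMap.ker (skewShift K σ hσ a - LinearMap.mulLeft K c) = ⊥
  · rw [hbot, finrank_bot]
    exact zero_le_one
  obtain ⟨b, hb, hb0⟩ := (Submodule.ne_bot_iff _).1 hbot
  have hσb := mem_ker_skewShift_sub_iff.1 hb
  refine finrank_le_one ⟨b, hb⟩ fun ⟨b', hb'⟩ => ?_
  have hσb' := mem_ker_skewShift_sub_iff.1 hb'
  have hfixed : σ (b' * b⁻¹) = b' * b⁻¹ := by
    have hσb0 : σ b ≠ 0 := (map_ne_zero σ).2 hb0
    have hcross : σ b' * b = b' * σ b :=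
      mul_right_cancel₀ ha (by linear_combination b * hσb' - b' * hσb)
    rw [map_mul, map_inv₀]
    field_simp
    linear_combination hcross
  obtain ⟨t, ht⟩ := hfix _ hfixed
  refine ⟨t, Subtype.ext ?_⟩
  simp only [SetLike.mk_smul_mk, Algebra.smul_def, ht]
  field_simp

theorem sum_finrank_ker_skewShift_sub_le_one {ι : Type} [Fintype ι]
    (hfix : ∀ x, σ x = x → x ∈ Set.range (algebraMap K F)) {aa : ι → F}
    (ha0 : ∀ i, aa i ≠ 0) (haconj : Pairwise fun i j => ¬ SConj σ (aa i) (aa j)) (c : F) :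
    ∑ i, finrank K (LinearMap.ker (skewShift K σ hσ (aa i) - LinearMap.mulLeft K c)) ≤ 1 := by
  by_cases h : ∀ i, LinearMap.ker (skewShift K σ hσ (aa i) - LinearMap.mulLeft K c) = ⊥
  · rw [Finset.sum_eq_zero fun i _ => by rw [h i, finrank_bot]]
    exact zero_le_one
  obtain ⟨i₀, hi₀⟩ := not_forall.1 h
  rw [Finset.sum_eq_single i₀ (fun i _ hi => ?_) (by simp)]
  · exact finrank_ker_skewShift_sub_le_one hfix (ha0 i₀) c
  by_contra hne
  exact haconj hi.symm ((sConj_of_ker_skewShift_sub_ne_bot hi₀).trans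
    (sConj_of_ker_skewShift_sub_ne_bot (hσ := hσ) fun h => hne (by rw [h, finrank_bot])).symm)

/-- The Lam–Leroy bound, by induction on `N`: a nonzero kernel vector `b` at `a_{i₀}` makes
`c = σ(b) a_{i₀} b⁻¹` a right root, and dividing by `x - c` costs at most one dimension in
total, namely at the single conjugacy class of `c`. -/
theorem sum_finrank_ker_skewEval_lt [FiniteDimensional K F] {ι : Type} [Fintype ι]
    (hfix : ∀ x, σ x = x → x ∈ Set.range (algebraMap K F)) {aa : ι → F}
    (ha0 : ∀ i, aa i ≠ 0) (haconj : Pairwise fun i j => ¬ SConj σ (aa i) (aa j)) {N : ℕ}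
    {e : ℕ → F}
    (he : ∃ j < N, e j ≠ 0) :
    ∑ i, finrank K (LinearMap.ker (skewEval K σ hσ e N (aa i))) < N := by
  induction N generalizing e with
  | zero =>
    obtain ⟨j, hj, -⟩ := he
    exact absurd hj (Nat.not_lt_zero j)
  | succ N ih =>
    by_cases hker : ∀ i, LinearMap.ker (skewEval K σ hσ e (N + 1) (aa i)) = ⊥
    · rw [Finset.sum_eq_zero fun i _ => by rw [hker i, finrank_bot]]
      exact N.succ_pos
    obtain ⟨i₀, hi₀⟩ := not_forall.1 hker
    obtain ⟨b, hb, hb0⟩ := (Submodule.ne_bot_iff _).1 hi₀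
    set c := σ b * aa i₀ * b⁻¹
    have hc : ∑ t ∈ Finset.range (N + 1), e t * genNorm σ c t = 0 :=
      sum_mul_genNorm_eq_zero_of_mem_ker hb hb0
    have hquot := ih (exists_skewQuot_ne_zero σ he hc)
    have hone := sum_finrank_ker_skewShift_sub_le_one (hσ := hσ) hfix ha0 haconj c
    calc ∑ i, finrank K (LinearMap.ker (skewEval K σ hσ e (N + 1) (aa i)))
        ≤ ∑ i, (finrank K (LinearMap.ker
              (skewEval K σ hσ (skewQuot σ e (N + 1) c) N (aa i))) +
            finrank K (LinearMap.ker (skewShift K σ hσ (aa i) - LinearMap.mulLeft K c))) :=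
          Finset.sum_le_sum fun i _ => by
            rw [skewEval_succ_eq_comp e N hc, add_comm]
            exact finrank_ker_comp_le _ _
      _ < N + 1 := by
        rw [Finset.sum_add_distrib]
        omega

end LamLeroy

section Weights

open Module Finset

variable {K F : Type} [Field K] [Field F] [Algebra K F]

theorem rkq_le_rkqMat {s : ℕ} {ι : Type} [Finite ι] (X : Matrix (Fin s) ι F) (r : Fin s) :
    rkq K (X r) ≤ rkqMat K X := by
  have := FiniteDimensional.span_of_finite K (Set.finite_range fun j r => X r j)
  rw [rkq, rkqMat, show X r = LinearMap.proj (R := K) r ∘ fun j r => X r j from rfl,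
    Set.range_comp, ← Submodule.map_span]
  exact Submodule.finrank_map_le _ _

theorem wtV_le_wtM {s ℓ : ℕ} (nn : Fin ℓ → ℕ)
    (X : Matrix (Fin s) (Σ i : Fin ℓ, Fin (nn i)) F) (r : Fin s) :
    wtV K nn (X r) ≤ wtM K nn X :=
  sum_le_sum fun i _ => rkq_le_rkqMat (Matrix.of fun r μ => X r ⟨i, μ⟩) r

theorem wtM_le_card_ne_zero [DecidableEq F] {s ℓ : ℕ} (nn : Fin ℓ → ℕ)
    (X : Matrix (Fin s) (Σ i : Fin ℓ, Fin (nn i)) F) :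
    wtM K nn X ≤ #{p | (fun r => X r p) ≠ 0} :=
  calc wtM K nn X ≤ ∑ i, #{μ : Fin (nn i) | (fun r => X r ⟨i, μ⟩) ≠ 0} :=
        sum_le_sum fun i _ =>
          finrank_span_range_le_card_ne_zero (K := K) fun μ r => X r ⟨i, μ⟩
    _ = #{p | (fun r => X r p) ≠ 0} := by
        simp only [card_filter]
        exact (Fintype.sum_sigma fun p => if (fun r => X r p) ≠ 0 then 1 else 0).symm

end Weights

section Codewords

open Module Finset Matrix

variable {K F : Type} [Field K] [Field F] [Algebra K F] {σ : F ≃+* F} {ℓ : ℕ}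
  {nn : Fin ℓ → ℕ} {aa : Fin ℓ → F} {β : (Σ i : Fin ℓ, Fin (nn i)) → F} {s k : ℕ}

theorem codeword_apply_row (M : Matrix (Fin s) (Fin k) F) (r : Fin s) :
    codeword σ nn aa β k M r = M r ᵥ* moore σ nn aa k β :=
  rfl

theorem vecMul_moore_apply (hσ : ∀ t : K, σ (algebraMap K F t) = algebraMap K F t)
    (e : Fin k → F) (p : Σ i : Fin ℓ, Fin (nn i)) :
    (e ᵥ* moore σ nn aa k β) p =
      skewEval K σ hσ (Function.extend Fin.val e 0) k (aa p.1) (β p) := by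
  rw [skewEval_apply, ← Fin.sum_univ_eq_sum_range]
  simp [vecMul, dotProduct, moore, Fin.val_injective.extend_apply]

/-- All rows equal to a nonzero `e` whose codeword row vanishes on `k - 1` chosen columns. -/
theorem exists_wtM_codeword_add_le (hs : 0 < s) (hk : 0 < k) (hkn : k ≤ ∑ i, nn i + 1) :
    ∃ M : Matrix (Fin s) (Fin k) F,
      M ≠ 0 ∧ wtM K nn (codeword σ nn aa β k M) + k ≤ ∑ i, nn i + 1 := by
  classical
  obtain ⟨S, -, hS⟩ := exists_subset_card_eq (s := (univ : Finset (Σ i : Fin ℓ, Fin (nn i))))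
    (n := k - 1) (by simp; omega)
  obtain ⟨e, he, hSe⟩ :=
    exists_ne_zero_vecMul_eq_zero_on (moore σ nn aa k β) S (by simp; omega)
  set M : Matrix (Fin s) (Fin k) F := of fun _ => e
  refine ⟨M, fun h => he (congrFun h ⟨0, hs⟩), ?_⟩
  have hcols : #{p | (fun r => codeword σ nn aa β k M r p) ≠ 0} ≤ #Sᶜ :=
    card_le_card fun p hp => by
      simp only [mem_filter, mem_univ, true_and, mem_compl] at hp ⊢
      exact fun hpS => hp (funext fun r => hSe p hpS)
  have := wtM_le_card_ne_zero (K := K) nn (codeword σ nn aa β k M)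
  rw [card_compl, Fintype.card_sigma, hS] at hcols
  simp only [Fintype.card_fin] at hcols
  omega

theorem finrank_sup_sub_finrank_inf_liftSp {i : Fin ℓ}
    (hβ : LinearIndependent K fun μ : Fin (nn i) => β ⟨i, μ⟩)
    (M M' : Matrix (Fin s) (Fin k) F) :
    finrank K ↥(liftSp K σ nn aa β k M i ⊔ liftSp K σ nn aa β k M' i) -
        finrank K ↥(liftSp K σ nn aa β k M i ⊓ liftSp K σ nn aa β k M' i) =
      2 * rkqMat K (of fun r μ => codeword σ nn aa β k (M - M') r ⟨i, μ⟩) := by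
  set lift : Matrix (Fin s) (Fin k) F → Fin (nn i) → Fin (s + 1) → F :=
    fun M μ => Fin.cons (β ⟨i, μ⟩) fun j => codeword σ nn aa β k M j ⟨i, μ⟩
  have hdiff : lift M - lift M' =
      fun μ => Fin.cons 0 fun j => codeword σ nn aa β k (M - M') j ⟨i, μ⟩ := by
    funext μ r
    refine Fin.cases ?_ (fun j => ?_) r <;> simp [lift, codeword, Matrix.sub_mul]
  have hπ := finrank_sup_sub_finrank_inf_span (LinearMap.proj (R := K) (φ := fun _ => F) 0)
    (g := lift M) (g' := lift M') hβ rfl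
  rw [liftSp, liftSp, hπ, hdiff, finrank_span_range_cons_zero]
  rfl

variable [FiniteDimensional K F] (hσ : ∀ t : K, σ (algebraMap K F t) = algebraMap K F t)
  (hfix : ∀ x, σ x = x → x ∈ Set.range (algebraMap K F)) (ha0 : ∀ i, aa i ≠ 0)
  (haconj : Pairwise fun i j => ¬ SConj σ (aa i) (aa j))
  (hβ : ∀ i, LinearIndependent K fun μ : Fin (nn i) => β ⟨i, μ⟩)
include hσ hfix ha0 haconj hβ

/-- Block by block, rank-nullity for `f(D_{a_i})` on the span of `β^(i)`, summed against the
Lam–Leroy bound on the kernels. -/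
theorem add_le_wtV_vecMul_moore {e : Fin k → F} (he : e ≠ 0) :
    ∑ i, nn i + 1 ≤ wtV K nn (e ᵥ* moore σ nn aa k β) + k := by
  set f : ℕ → F := Function.extend Fin.val e 0
  have hf : ∃ j < k, f j ≠ 0 := by
    obtain ⟨t, ht⟩ := Function.ne_iff.1 he
    exact ⟨t, t.isLt, by simpa [f, Fin.val_injective.extend_apply] using ht⟩
  have hblock : ∀ i,
      nn i ≤ rkq K (fun μ : Fin (nn i) => (e ᵥ* moore σ nn aa k β) ⟨i, μ⟩) +
        finrank K (LinearMap.ker (skewEval K σ hσ f k (aa i))) := fun i => by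
    have h := finrank_le_finrank_map_add_finrank_ker (skewEval K σ hσ f k (aa i))
      (Submodule.span K (Set.range fun μ => β ⟨i, μ⟩))
    have hrow : (fun μ : Fin (nn i) => (e ᵥ* moore σ nn aa k β) ⟨i, μ⟩) =
        skewEval K σ hσ f k (aa i) ∘ fun μ => β ⟨i, μ⟩ :=
      funext fun μ => vecMul_moore_apply hσ e ⟨i, μ⟩
    rwa [finrank_span_eq_card (hβ i), Fintype.card_fin, Submodule.map_span, ← Set.range_comp,
      ← hrow] at h
  have hker := sum_finrank_ker_skewEval_lt (hσ := hσ) hfix ha0 haconj hf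
  have hsum := sum_le_sum fun i (_ : i ∈ univ) => hblock i
  rw [sum_add_distrib] at hsum
  rw [wtV]
  omega

theorem add_le_wtM_codeword {E : Matrix (Fin s) (Fin k) F} (hE : E ≠ 0) :
    ∑ i, nn i + 1 ≤ wtM K nn (codeword σ nn aa β k E) + k := by
  obtain ⟨r, hr⟩ := Function.ne_iff.1 hE
  calc ∑ i, nn i + 1 ≤ wtV K nn (E r ᵥ* moore σ nn aa k β) + k :=
        add_le_wtV_vecMul_moore hσ hfix ha0 haconj hβ hr
    _ = wtV K nn (codeword σ nn aa β k E r) + k := by rw [codeword_apply_row]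
    _ ≤ wtM K nn (codeword σ nn aa β k E) + k := Nat.add_le_add_right (wtV_le_wtM nn _ r) k

end Codewords

theorem LILRS_minimum_sum_subspace_distance_general
    {K F : Type} [Field K] [Field F] [Algebra K F] [Fintype F]
    (σ : F ≃+* F)
    (hfix : ∀ x : F, σ x = x ↔ x ∈ Set.range (algebraMap K F))
    {ℓ : ℕ} (nn : Fin ℓ → ℕ) (aa : Fin ℓ → F)
    (ha0 : ∀ i, aa i ≠ 0)
    (haconj : ∀ i j : Fin ℓ, i ≠ j → ¬ SConj σ (aa i) (aa j))
    (β : (Σ i : Fin ℓ, Fin (nn i)) → F)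
    (hβ : ∀ i, LinearIndependent K fun μ : Fin (nn i) => β ⟨i, μ⟩)
    {s : ℕ} (hs : 1 ≤ s) {k n : ℕ} (hn : n = ∑ i, nn i)
    (hk : 1 ≤ k) (hkn : k ≤ n) :
    (∀ M M' : Matrix (Fin s) (Fin k) F, M ≠ M' →
        2 * (n - k + 1) ≤
          ∑ i, (Module.finrank K ↥(liftSp K σ nn aa β k M i ⊔ liftSp K σ nn aa β k M' i)
            - Module.finrank K ↥(liftSp K σ nn aa β k M i ⊓ liftSp K σ nn aa β k M' i))) ∧
      ∃ M M' : Matrix (Fin s) (Fin k) F, M ≠ M' ∧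
        ∑ i, (Module.finrank K ↥(liftSp K σ nn aa β k M i ⊔ liftSp K σ nn aa β k M' i)
            - Module.finrank K ↥(liftSp K σ nn aa β k M i ⊓ liftSp K σ nn aa β k M' i))
          = 2 * (n - k + 1) := by
  have hσ : ∀ t : K, σ (algebraMap K F t) = algebraMap K F t := fun t => (hfix _).2 ⟨t, rfl⟩
  have hlow : ∀ E : Matrix (Fin s) (Fin k) F, E ≠ 0 →
      n + 1 ≤ wtM K nn (codeword σ nn aa β k E) + k := fun E hE =>
    hn ▸ add_le_wtM_codeword hσ (fun x => (hfix x).1) ha0 (fun i j => haconj i j) hβ hE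
  have hdist : ∀ M M' : Matrix (Fin s) (Fin k) F,
      ∑ i, (Module.finrank K ↥(liftSp K σ nn aa β k M i ⊔ liftSp K σ nn aa β k M' i)
        - Module.finrank K ↥(liftSp K σ nn aa β k M i ⊓ liftSp K σ nn aa β k M' i)) =
      2 * wtM K nn (codeword σ nn aa β k (M - M')) := fun M M' => by
    rw [wtM, Finset.mul_sum]
    exact Finset.sum_congr rfl fun i _ => finrank_sup_sub_finrank_inf_liftSp (hβ i) M M'
  refine ⟨fun M M' hMM' => ?_, ?_⟩
  · have := hlow _ (sub_ne_zero.2 hMM')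
    rw [hdist]
    omega
  · obtain ⟨M, hM, hup⟩ :=
      exists_wtM_codeword_add_le (K := K) (σ := σ) (aa := aa) (β := β) hs hk (by omega)
    have := hlow M hM
    refine ⟨M, 0, hM, ?_⟩
    rw [hdist, sub_zero]
    omega

/-- Minimum sum-subspace distance of lifted ILRS codes.
The minimum of `Σ_i d_S(U^(i)(M), U^(i)(M'))` over all pairs of distinct
`M, M' ∈ F^{s×k}` is exactly `2(n − k + 1)`. -/
theorem LILRS_minimum_sum_subspace_distance
    {K F : Type} [Field K] [Field F] [Algebra K F] [Fintype K] [Fintype F]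
    (σ : F ≃+* F)
    (hfix : ∀ x : F, σ x = x ↔ x ∈ Set.range (algebraMap K F))
    {ℓ : ℕ} (hℓ : 1 ≤ ℓ) (nn : Fin ℓ → ℕ) (aa : Fin ℓ → F)
    (ha0 : ∀ i, aa i ≠ 0)
    (haconj : ∀ i j : Fin ℓ, i ≠ j → ¬ SConj σ (aa i) (aa j))
    (β : (Σ i : Fin ℓ, Fin (nn i)) → F)
    (hβ : ∀ i, LinearIndependent K fun μ : Fin (nn i) => β ⟨i, μ⟩)
    {s : ℕ} (hs : 1 ≤ s) {k n : ℕ} (hn : n = ∑ i, nn i)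
    (hk : 1 ≤ k) (hkn : k ≤ n) :
    (∀ M M' : Matrix (Fin s) (Fin k) F, M ≠ M' →
        2 * (n - k + 1) ≤
          ∑ i, (Module.finrank K ↥(liftSp K σ nn aa β k M i ⊔ liftSp K σ nn aa β k M' i)
            - Module.finrank K ↥(liftSp K σ nn aa β k M i ⊓ liftSp K σ nn aa β k M' i))) ∧
      ∃ M M' : Matrix (Fin s) (Fin k) F, M ≠ M' ∧
        ∑ i, (Module.finrank K ↥(liftSp K σ nn aa β k M i ⊔ liftSp K σ nn aa β k M' i)
            - Module.finrank K ↥(liftSp K σ nn aa β k M i ⊓ liftSp K σ nn aa β k M' i))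
          = 2 * (n - k + 1) :=
  LILRS_minimum_sum_subspace_distance_general σ hfix nn aa ha0 haconj β hβ hs hn hk hkn

end Stmt16
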